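/- arXiv:math/0007051 — 4 statements merged into one kernel-verified Lean document; each statement's English description precedes it below -/
import Mathlib

section
/- Let n ≥ 1 and let Q be a nonzero homogeneous polynomial of degree s in n complex variables. Then for every integer l ≥ 0 the differential operator Q(D) maps the space P_{l+s} of homogeneous polynomials of degree l+s onto the space P_l of homogeneous polynomials of degree l; consequently Q(D) : 𝒫 → 𝒫 is surjective. -/
open MvPolynomial

/-- The iterated partial derivative `∂^α = ∏ⱼ ∂ⱼ^{α j}` acting on polynomials in `n`
variables over `ℂ`. -/
noncomputable def pderivPow {n : ℕ} (α : Fin n →₀ ℕ) :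
    Module.End ℂ (MvPolynomial (Fin n) ℂ) :=
  ((List.finRange n).map fun j =>
    ((MvPolynomial.pderiv j).toLinearMap : Module.End ℂ (MvPolynomial (Fin n) ℂ)) ^ (α j)).prod

/-- For a polynomial `Q = ∑_α c_α x^α`, the constant-coefficient differential operator
`Q(D) = ∑_α c_α D^α`, where `D_j = -i ∂/∂x_j`. -/
noncomputable def QD {n : ℕ} (Q : MvPolynomial (Fin n) ℂ) :
    Module.End ℂ (MvPolynomial (Fin n) ℂ) :=
  ∑ α ∈ Q.support, (Q.coeff α * (-Complex.I) ^ (α.sum fun _ k => k)) • pderivPow α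

/-!
The apolar pairing `⟨p, r⟩ = coeff 0 (p(D) r)` is nondegenerate on each space `P_k` of
homogeneous polynomials: on monomials, `⟨x^α, x^β⟩ = (-i)^|α| α! δ_{αβ}`. Since `Q ↦ Q(D)` is an
algebra map into the commutative algebra of endomorphisms generated by the partial derivatives,
`⟨p Q, r⟩ = ⟨p, Q(D) r⟩`. Hence `Q(D) : P_{l+s} → P_l` is the transpose of multiplication by `Q`,
`P_l → P_{l+s}`, which is injective because `Q ≠ 0`; so `Q(D)` maps `P_{l+s}` onto `P_l`.
Surjectivity on all polynomials follows by splitting into homogeneous components.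
-/

namespace MvPolynomial

variable {σ R : Type*} [CommSemiring R]

theorem pderiv_pderiv_comm (i j : σ) (p : MvPolynomial σ R) :
    pderiv i (pderiv j p) = pderiv j (pderiv i p) := by
  classical
  ext m
  simp only [coeff_pderiv, Finsupp.add_apply, Finsupp.single_apply]
  rcases eq_or_ne i j with rfl | hij
  · rfl
  · rw [if_neg hij, if_neg hij.symm, add_right_comm m]
    ring_nf

theorem isHomogeneous_iff_degree_eq {φ : MvPolynomial σ R} {n : ℕ} :
    φ.IsHomogeneous n ↔ ∀ d, coeff d φ ≠ 0 → d.degree = n := by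
  simp only [IsHomogeneous, IsWeightedHomogeneous, Finsupp.degree_eq_weight_one, Pi.one_def]

theorem coeff_pderiv_pow (i : σ) (k : ℕ) (m : σ →₀ ℕ) (p : MvPolynomial σ R) :
    coeff m (((pderiv i).toLinearMap ^ k : Module.End R (MvPolynomial σ R)) p) =
      coeff (m + Finsupp.single i k) p * ((m i + k).descFactorial k : R) := by
  induction k generalizing p with
  | zero => simp
  | succ k ih =>
    rw [pow_succ, Module.End.mul_apply, ih]
    simp only [Derivation.coeFn_coe, coeff_pderiv, Finsupp.add_apply, Finsupp.single_eq_same,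
      add_assoc, ← Finsupp.single_add]
    rw [← add_assoc (m i) k 1, Nat.succ_descFactorial_succ]
    push_cast
    ring

variable (σ R) in
noncomputable def pderivAlgebra : Subalgebra R (Module.End R (MvPolynomial σ R)) :=
  Algebra.adjoin R (Set.range fun i => (pderiv i).toLinearMap)

instance : IsMulCommutative (pderivAlgebra σ R) :=
  Algebra.isMulCommutative_adjoin R <| by
    rintro _ ⟨i, rfl⟩ _ ⟨j, rfl⟩
    exact LinearMap.ext (pderiv_pderiv_comm i j)

open scoped IsMulCommutative

variable (R) in
noncomputable def pderivOp (i : σ) : pderivAlgebra σ R :=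
  ⟨(pderiv i).toLinearMap, Algebra.subset_adjoin (Set.mem_range_self i)⟩

@[simp]
theorem coe_pderivOp (i : σ) :
    (pderivOp R i : Module.End R (MvPolynomial σ R)) = (pderiv i).toLinearMap :=
  rfl

theorem coeff_prod_pderivOp_pow (s : Finset σ) (γ : σ →₀ ℕ) (m : σ →₀ ℕ)
    (p : MvPolynomial σ R) :
    coeff m (((∏ j ∈ s, pderivOp R j ^ γ j : pderivAlgebra σ R) :
      Module.End R (MvPolynomial σ R)) p) =
      coeff (m + ∑ j ∈ s, Finsupp.single j (γ j)) p *
        ∏ j ∈ s, ((m j + γ j).descFactorial (γ j) : R) := by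
  classical
  induction s using Finset.induction_on generalizing m with
  | empty => simp
  | insert i s hi ih =>
    rw [Finset.prod_insert hi, MulMemClass.coe_mul, Module.End.mul_apply, SubmonoidClass.coe_pow,
      coe_pderivOp, coeff_pderiv_pow, ih, Finset.sum_insert hi, Finset.prod_insert hi, add_assoc]
    have hm : ∀ j ∈ s, (m + Finsupp.single i (γ i)) j = m j := fun j hj => by
      simp [Finsupp.single_eq_of_ne (ne_of_mem_of_not_mem hj hi)]
    rw [Finset.prod_congr rfl fun j hj => by rw [hm j hj]]
    ring

end MvPolynomial

section
open scoped IsMulCommutative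
variable {n : ℕ}

theorem pderivPow_eq_prod (γ : Fin n →₀ ℕ) :
    pderivPow γ = ((∏ j, pderivOp ℂ j ^ γ j : pderivAlgebra (Fin n) ℂ) :
      Module.End ℂ (MvPolynomial (Fin n) ℂ)) := by
  simp [pderivPow, Fin.prod_univ_def, Function.comp_def]

theorem coeff_pderivPow (γ m : Fin n →₀ ℕ) (p : MvPolynomial (Fin n) ℂ) :
    coeff m (pderivPow γ p) = coeff (m + γ) p * ∏ j, ((m j + γ j).descFactorial (γ j) : ℂ) := by
  rw [pderivPow_eq_prod, coeff_prod_pderivOp_pow, Finsupp.univ_sum_single]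

theorem MvPolynomial.IsHomogeneous.pderivPow {d : ℕ} {p : MvPolynomial (Fin n) ℂ}
    (hp : p.IsHomogeneous d) (γ : Fin n →₀ ℕ) :
    (pderivPow γ p).IsHomogeneous (d - γ.degree) := by
  refine isHomogeneous_iff_degree_eq.mpr fun m hm => ?_
  rw [coeff_pderivPow] at hm
  have hmγ := isHomogeneous_iff_degree_eq.mp hp _ (left_ne_zero_of_mul hm)
  rw [map_add] at hmγ
  omega

theorem QD_eq_aeval (Q : MvPolynomial (Fin n) ℂ) :
    QD Q = ((aeval fun j => -Complex.I • pderivOp ℂ j) Q : pderivAlgebra (Fin n) ℂ) := by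
  conv_rhs => rw [Q.as_sum, map_sum, AddSubmonoidClass.coe_finsetSum]
  refine Finset.sum_congr rfl fun α _ => ?_
  rw [aeval_monomial, Finsupp.prod_fintype _ _ (fun _ => pow_zero _), pderivPow_eq_prod]
  rw [Finsupp.sum_fintype _ _ fun _ => rfl, ← Finset.prod_pow_eq_pow_sum]
  simp only [smul_pow, Finset.prod_smul, Algebra.algebraMap_eq_smul_one, smul_mul_assoc, one_mul,
    smul_smul, Subalgebra.coe_smul]

theorem QD_mul (p Q : MvPolynomial (Fin n) ℂ) : QD (p * Q) = QD p * QD Q := by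
  simp only [QD_eq_aeval, map_mul, MulMemClass.coe_mul]

theorem MvPolynomial.IsHomogeneous.QD_apply {s d : ℕ} {Q p : MvPolynomial (Fin n) ℂ}
    (hQ : Q.IsHomogeneous s) (hp : p.IsHomogeneous d) : (QD Q p).IsHomogeneous (d - s) := by
  rw [QD, LinearMap.sum_apply]
  refine IsHomogeneous.sum _ _ _ fun α hα => ?_
  have hα : α.degree = s := isHomogeneous_iff_degree_eq.mp hQ α (mem_support_iff.mp hα)
  exact hα ▸ (homogeneousSubmodule (Fin n) ℂ (d - α.degree)).smul_mem _ (hp.pderivPow α)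

noncomputable def apolarPairing : MvPolynomial (Fin n) ℂ →ₗ[ℂ] MvPolynomial (Fin n) ℂ →ₗ[ℂ] ℂ :=
  LinearMap.mk₂ ℂ (fun p r => coeff 0 (QD p r))
    (by simp [QD_eq_aeval]) (by simp [QD_eq_aeval]) (by simp) (by simp)

theorem apolarPairing_apply (p r : MvPolynomial (Fin n) ℂ) :
    apolarPairing p r = coeff 0 (QD p r) :=
  rfl

theorem apolarPairing_mul (p Q r : MvPolynomial (Fin n) ℂ) :
    apolarPairing (p * Q) r = apolarPairing p (QD Q r) := by
  rw [apolarPairing_apply, apolarPairing_apply, QD_mul, Module.End.mul_apply]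

theorem apolarPairing_monomial (p : MvPolynomial (Fin n) ℂ) (α : Fin n →₀ ℕ) :
    apolarPairing p (monomial α 1) =
      coeff α p * ((-Complex.I) ^ (α.sum fun _ k => k) * ∏ j, ((α j).factorial : ℂ)) := by
  rw [apolarPairing_apply, QD, LinearMap.sum_apply, coeff_sum, Finset.sum_eq_single α]
  · simp [coeff_pderivPow, Nat.descFactorial_self, mul_assoc]
  · intro β _ hβα
    simp [coeff_pderivPow, coeff_monomial, Ne.symm hβα]
  · intro hα
    simp [notMem_support_iff.mp hα]

theorem eq_zero_of_forall_apolarPairing_eq_zero {k : ℕ} {p : MvPolynomial (Fin n) ℂ}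
    (hp : p.IsHomogeneous k) (h : ∀ r : MvPolynomial (Fin n) ℂ, r.IsHomogeneous k →
      apolarPairing p r = 0) : p = 0 := by
  by_contra hp0
  obtain ⟨α, hα⟩ := support_nonempty.mpr hp0
  have hα' : α.degree = k := isHomogeneous_iff_degree_eq.mp hp α (mem_support_iff.mp hα)
  have hfact : ∏ j, ((α j).factorial : ℂ) ≠ 0 :=
    Finset.prod_ne_zero_iff.mpr fun j _ => Nat.cast_ne_zero.mpr (Nat.factorial_ne_zero _)
  have := h _ (isHomogeneous_monomial 1 hα')
  rw [apolarPairing_monomial] at this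
  exact mul_ne_zero (mem_support_iff.mp hα)
    (mul_ne_zero (pow_ne_zero _ (neg_ne_zero.mpr Complex.I_ne_zero)) hfact) this

instance (k : ℕ) : FiniteDimensional ℂ (homogeneousSubmodule (Fin n) ℂ k) :=
  Module.Finite.iff_fg.mpr (homogeneousSubmodule_fg _ _ k)

noncomputable def homogeneousApolarPairing (k : ℕ) :
    homogeneousSubmodule (Fin n) ℂ k →ₗ[ℂ] Module.Dual ℂ (homogeneousSubmodule (Fin n) ℂ k) :=
  apolarPairing.compl₁₂ (homogeneousSubmodule (Fin n) ℂ k).subtype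
    (homogeneousSubmodule (Fin n) ℂ k).subtype

theorem homogeneousApolarPairing_bijective (k : ℕ) :
    Function.Bijective (homogeneousApolarPairing (n := n) k) := by
  have hinj : Function.Injective (homogeneousApolarPairing (n := n) k) := by
    refine (injective_iff_map_eq_zero _).mpr fun p hp => Subtype.ext ?_
    exact eq_zero_of_forall_apolarPairing_eq_zero p.2 fun r hr => LinearMap.congr_fun hp ⟨r, hr⟩
  exact ⟨hinj, (LinearMap.injective_iff_surjective_of_finrank_eq_finrank
    Subspace.dual_finrank_eq.symm).mp hinj⟩

theorem exists_isHomogeneous_QD_eq {s l : ℕ} {Q p : MvPolynomial (Fin n) ℂ} (hQ0 : Q ≠ 0)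
    (hQ : Q.IsHomogeneous s) (hp : p.IsHomogeneous l) :
    ∃ q : MvPolynomial (Fin n) ℂ, q.IsHomogeneous (l + s) ∧ QD Q q = p := by
  let T : homogeneousSubmodule (Fin n) ℂ (l + s) →ₗ[ℂ] homogeneousSubmodule (Fin n) ℂ l :=
    (QD Q).restrict fun q hq => by simpa using hQ.QD_apply hq
  suffices hT : Function.Surjective T by
    obtain ⟨q, hq⟩ := hT ⟨p, hp⟩
    exact ⟨q, q.2, congrArg Subtype.val hq⟩
  refine LinearMap.dualMap_injective_iff.mp <| (injective_iff_map_eq_zero _).mpr fun φ hφ => ?_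
  obtain ⟨p₀, rfl⟩ := (homogeneousApolarPairing_bijective l).2 φ
  have hp₀Q : (p₀ : MvPolynomial (Fin n) ℂ) * Q = 0 :=
    eq_zero_of_forall_apolarPairing_eq_zero (p₀.2.mul hQ) fun r hr => by
      rw [apolarPairing_mul]
      exact LinearMap.congr_fun hφ ⟨r, hr⟩
  have hp₀ : p₀ = 0 := Subtype.ext ((mul_eq_zero_iff_right hQ0).mp hp₀Q)
  rw [hp₀, map_zero]

end

theorem QD_surjective_on_homogeneous_general {n : ℕ} {s : ℕ}
    (Q : MvPolynomial (Fin n) ℂ) (hQne : Q ≠ 0) (hQhom : Q.IsHomogeneous s) :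
    (∀ (l : ℕ) (p : MvPolynomial (Fin n) ℂ), p.IsHomogeneous l →
      ∃ q : MvPolynomial (Fin n) ℂ, q.IsHomogeneous (l + s) ∧ QD Q q = p) ∧
    Function.Surjective (QD Q) := by
  refine ⟨fun l p hp => exists_isHomogeneous_QD_eq hQne hQhom hp, fun p => ?_⟩
  choose q hq using fun i =>
    exists_isHomogeneous_QD_eq hQne hQhom (homogeneousComponent_isHomogeneous i p)
  refine ⟨∑ i ∈ Finset.range (p.totalDegree + 1), q i, ?_⟩
  simp only [map_sum, fun i => (hq i).2, sum_homogeneousComponent]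

/-- If `Q ≠ 0` is homogeneous of degree `s` in `n ≥ 1` complex variables, then `Q(D)`
maps the space of homogeneous polynomials of degree `l + s` onto the space of homogeneous
polynomials of degree `l`, for every `l`; consequently `Q(D) : 𝒫 → 𝒫` is surjective. -/
theorem QD_surjective_on_homogeneous {n : ℕ} (hn : 1 ≤ n) {s : ℕ}
    (Q : MvPolynomial (Fin n) ℂ) (hQne : Q ≠ 0) (hQhom : Q.IsHomogeneous s) :
    (∀ (l : ℕ) (p : MvPolynomial (Fin n) ℂ), p.IsHomogeneous l →
      ∃ q : MvPolynomial (Fin n) ℂ, q.IsHomogeneous (l + s) ∧ QD Q q = p) ∧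
    Function.Surjective (QD Q) :=
  QD_surjective_on_homogeneous_general Q hQne hQhom
end

section
/- Let n ≥ 1, N ≥ 0, and let λ be a nonzero polynomial in n complex variables with homogeneous decomposition λ = Σ_{l ≥ l₀} λ_l, where λ_{l₀} ≠ 0 is the lowest-degree nonzero homogeneous component. Define the linear endomorphism Λ_N of 𝒫_N by letting Λ_N(p) be the truncation of the product λ·p to degree at most N (i.e., all monomials of total degree greater than N are discarded). Then the codimension of the range of Λ_N in 𝒫_N is equal to the dimension of the space of λ_{l₀}-harmonic polynomials of degree at most N, i.e., of the space {p ∈ 𝒫_N : λ_{l₀}(D)p = 0}. -/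
open MvPolynomial

/-!
Both sides equal `dim 𝒫_N - dim 𝒫_{N-l₀}` when `l₀ ≤ N`, and `dim 𝒫_N` otherwise.

The truncated product `p ↦ (λ p)_{≤ N}` only sees the components of `p` of degree `≤ N - l₀`,
and it is injective on `𝒫_{N-l₀}`, because the lowest nonzero component of `λ p` is `λ_{l₀}`
times the lowest nonzero component of `p`.

Up to the unit `(-i)^{l₀}`, `λ_{l₀}(D)` is `λ_{l₀}(∂)`, which maps `𝒫_N` onto `𝒫_{N-l₀}`: for the
Fischer pairing `⟨p, r⟩ = (p(∂) r)(0) = ∑ α! p_α r_α`, which is nondegenerate on every `𝒫_m`,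
`λ_{l₀}(∂)` is adjoint to the injective multiplication by `λ_{l₀}`.
-/

namespace LinearMap

variable {K V W : Type*} [Field K] [AddCommGroup V] [Module K V] [AddCommGroup W] [Module K W]

theorem IsAdjointPair.surjective_of_injective [FiniteDimensional K W]
    {B : V →ₗ[K] V →ₗ[K] K} {B' : W →ₗ[K] W →ₗ[K] K} (hB : B.SeparatingRight)
    (hB' : B'.SeparatingLeft) {T : V →ₗ[K] W} {S : W →ₗ[K] V} (hTS : IsAdjointPair B B' T S)
    (hS : Function.Injective S) : Function.Surjective T := by
  rw [← dualMap_injective_iff, injective_iff_map_eq_zero]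
  intro φ hφ
  obtain ⟨w, rfl⟩ :=
    flip_surjective_iff₁.mpr (ker_eq_bot.mp (separatingLeft_iff_ker_eq_bot.mp hB')) φ
  have hSw : S w = 0 := hB _ fun v => by rw [← hTS]; exact DFunLike.congr_fun hφ v
  rw [hS (hSw.trans S.map_zero.symm), map_zero]

end LinearMap

namespace Submodule

variable {K V W : Type*} [Field K] [AddCommGroup V] [Module K V] [AddCommGroup W] [Module K W]

theorem finrank_inf_ker_add_finrank_map (f : V →ₗ[K] W) (U : Submodule K V)
    [FiniteDimensional K U] :
    Module.finrank K ↥(U ⊓ LinearMap.ker f) + Module.finrank K (U.map f) =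
      Module.finrank K U := by
  have hker : (U ⊓ LinearMap.ker f).comap U.subtype = LinearMap.ker (f.domRestrict U) := by
    rw [LinearMap.ker_domRestrict, comap_inf, comap_subtype_self, top_inf_eq]
  rw [← (comapSubtypeEquivOfLe inf_le_left).finrank_eq, hker, ← LinearMap.range_domRestrict,
    add_comm, LinearMap.finrank_range_add_finrank_ker]

theorem finrank_quotient_comap_subtype_add_finrank {U X : Submodule K V} [FiniteDimensional K U]
    (hX : X ≤ U) :
    Module.finrank K (U ⧸ X.comap U.subtype) + Module.finrank K X = Module.finrank K U := by
  rw [← (comapSubtypeEquivOfLe hX).finrank_eq, finrank_quotient_add_finrank]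

end Submodule

namespace MvPolynomial

open Finset

section CommSemiring

variable {σ R : Type*} [CommSemiring R]

attribute [local instance] gradedAlgebra in
theorem homogeneousComponent_mul (f g : MvPolynomial σ R) (k : ℕ) :
    homogeneousComponent k (f * g) =
      ∑ ij ∈ antidiagonal k, homogeneousComponent ij.1 f * homogeneousComponent ij.2 g := by
  have := DirectSum.coe_mul_apply_eq_sum_antidiagonal (homogeneousSubmodule σ R)
    (DirectSum.decompose (homogeneousSubmodule σ R) f) (DirectSum.decompose _ g) k
  rw [← DirectSum.decompose_mul] at this
  simpa only [DirectSum.decompose, Equiv.coe_fn_mk, decomposition.decompose'_apply] using this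

theorem homogeneousComponent_mul_eq_zero_of_lt {f g : MvPolynomial σ R} {a b k : ℕ}
    (hf : ∀ i < a, homogeneousComponent i f = 0) (hg : ∀ j < b, homogeneousComponent j g = 0)
    (hk : k < a + b) : homogeneousComponent k (f * g) = 0 := by
  rw [homogeneousComponent_mul]
  refine sum_eq_zero fun ij hij => ?_
  rw [HasAntidiagonal.mem_antidiagonal] at hij
  rcases lt_or_ge ij.1 a with h | h
  · rw [hf _ h, zero_mul]
  · rw [hg _ (by omega), mul_zero]

theorem homogeneousComponent_add_mul {f g : MvPolynomial σ R} {a b : ℕ}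
    (hf : ∀ i < a, homogeneousComponent i f = 0) (hg : ∀ j < b, homogeneousComponent j g = 0) :
    homogeneousComponent (a + b) (f * g) = homogeneousComponent a f * homogeneousComponent b g := by
  rw [homogeneousComponent_mul,
    sum_eq_single_of_mem (a, b) (HasAntidiagonal.mem_antidiagonal.mpr rfl)]
  rintro ⟨i, j⟩ hij hne
  rw [HasAntidiagonal.mem_antidiagonal] at hij
  rcases lt_or_ge i a with h | h
  · rw [hf _ h, zero_mul]
  · rw [hg _ (by grind), mul_zero]

variable (σ R) in
noncomputable def truncTotalDegree (N : ℕ) : MvPolynomial σ R →ₗ[R] MvPolynomial σ R :=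
  ∑ l ∈ range (N + 1), homogeneousComponent l

theorem truncTotalDegree_apply (N : ℕ) (f : MvPolynomial σ R) :
    truncTotalDegree σ R N f = ∑ l ∈ range (N + 1), homogeneousComponent l f :=
  LinearMap.sum_apply _ _ _

theorem truncTotalDegree_mem (N : ℕ) (f : MvPolynomial σ R) :
    truncTotalDegree σ R N f ∈ restrictTotalDegree σ R N := by
  rw [truncTotalDegree_apply]
  refine Submodule.sum_mem _ fun l hl => (mem_restrictTotalDegree _ _ _).mpr ?_
  exact (homogeneousComponent_isHomogeneous l f).totalDegree_le.trans (by grind)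

theorem homogeneousComponent_truncTotalDegree {N k : ℕ} (hk : k ≤ N) (f : MvPolynomial σ R) :
    homogeneousComponent k (truncTotalDegree σ R N f) = homogeneousComponent k f := by
  rw [truncTotalDegree_apply, map_sum, sum_eq_single_of_mem k (by grind)]
  · exact homogeneousComponent_of_mem (homogeneousComponent_mem k f) |>.trans (if_pos rfl)
  · intro l _ hl
    exact homogeneousComponent_of_mem (homogeneousComponent_mem l f) |>.trans (if_neg hl.symm)

theorem truncTotalDegree_eq_zero {N : ℕ} {f : MvPolynomial σ R}
    (hf : ∀ k ≤ N, homogeneousComponent k f = 0) : truncTotalDegree σ R N f = 0 := by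
  rw [truncTotalDegree_apply]
  exact sum_eq_zero fun k hk => hf k (by grind)

theorem map_restrictTotalDegree_le {M : Type*} [AddCommMonoid M] [Module R M]
    (f : MvPolynomial σ R →ₗ[R] M) {U : Submodule R M} {m : ℕ}
    (h : ∀ β : σ →₀ ℕ, β.degree ≤ m → f (monomial β 1) ∈ U) :
    (restrictTotalDegree σ R m).map f ≤ U := by
  rw [restrictTotalDegree, restrictSupport_eq_span, Submodule.map_span, Submodule.span_le]
  rintro - ⟨-, ⟨β, hβ, rfl⟩, rfl⟩
  exact h β hβ

end CommSemiring

section CommRing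

variable {σ R : Type*} [CommRing R] {N l₀ : ℕ} {lam : MvPolynomial σ R}

theorem truncTotalDegree_mul_eq_zero (hlam : ∀ l < l₀, homogeneousComponent l lam = 0)
    {p : MvPolynomial σ R} {m : ℕ} (hp : ∀ j < m, homogeneousComponent j p = 0)
    (hN : N < l₀ + m) : truncTotalDegree σ R N (lam * p) = 0 :=
  truncTotalDegree_eq_zero fun _ hk => homogeneousComponent_mul_eq_zero_of_lt hlam hp (by omega)

theorem truncTotalDegree_mul_eq_zero_of_lt (hlam : ∀ l < l₀, homogeneousComponent l lam = 0)
    (hN : N < l₀) (p : MvPolynomial σ R) : truncTotalDegree σ R N (lam * p) = 0 :=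
  truncTotalDegree_mul_eq_zero hlam (m := 0) (fun _ h => absurd h (Nat.not_lt_zero _)) hN

theorem truncTotalDegree_mul_truncTotalDegree (hlam : ∀ l < l₀, homogeneousComponent l lam = 0)
    (hl : l₀ ≤ N) (p : MvPolynomial σ R) :
    truncTotalDegree σ R N (lam * truncTotalDegree σ R (N - l₀) p) =
      truncTotalDegree σ R N (lam * p) := by
  have htail : ∀ j < N - l₀ + 1,
      homogeneousComponent j (p - truncTotalDegree σ R (N - l₀) p) = 0 := fun j hj => by
    rw [map_sub, homogeneousComponent_truncTotalDegree (by omega), sub_self]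
  have := truncTotalDegree_mul_eq_zero hlam htail (N := N) (by omega)
  rwa [mul_sub, map_sub, sub_eq_zero, eq_comm] at this

theorem map_truncTotalDegree_mul_restrictTotalDegree
    (hlam : ∀ l < l₀, homogeneousComponent l lam = 0) (hl : l₀ ≤ N) :
    (restrictTotalDegree σ R N).map (truncTotalDegree σ R N ∘ₗ LinearMap.mulLeft R lam) =
      (restrictTotalDegree σ R (N - l₀)).map
        (truncTotalDegree σ R N ∘ₗ LinearMap.mulLeft R lam) := by
  refine le_antisymm ?_ (Submodule.map_mono fun p hp => ?_)
  · rintro - ⟨p, -, rfl⟩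
    refine ⟨_, truncTotalDegree_mem (N - l₀) p, ?_⟩
    simp only [LinearMap.comp_apply, LinearMap.mulLeft_apply]
    exact truncTotalDegree_mul_truncTotalDegree hlam hl p
  · rw [mem_restrictTotalDegree] at hp ⊢
    omega

theorem eq_zero_of_truncTotalDegree_mul_eq_zero [NoZeroDivisors R]
    (hlam₀ : homogeneousComponent l₀ lam ≠ 0) (hlam : ∀ l < l₀, homogeneousComponent l lam = 0)
    (hl : l₀ ≤ N) {p : MvPolynomial σ R} (hp : p ∈ restrictTotalDegree σ R (N - l₀))
    (h : truncTotalDegree σ R N (lam * p) = 0) : p = 0 := by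
  have hcomp : ∀ m, homogeneousComponent m p = 0 := by
    intro m
    induction m using Nat.strong_induction_on with
    | _ m ih =>
    rcases le_or_gt m (N - l₀) with hm | hm
    · have hlow := homogeneousComponent_add_mul hlam ih
      rw [← homogeneousComponent_truncTotalDegree (N := N) (by omega), h, map_zero] at hlow
      exact (mul_eq_zero.mp hlow.symm).resolve_left hlam₀
    · exact homogeneousComponent_eq_zero _ _ (((mem_restrictTotalDegree _ _ _).mp hp).trans_lt hm)
  rw [← sum_homogeneousComponent p]
  exact Finset.sum_eq_zero fun m _ => hcomp m

end CommRing

theorem finrank_map_truncTotalDegree_mul {σ K : Type*} [Field K] {N l₀ : ℕ}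
    {lam : MvPolynomial σ K} (hlam₀ : homogeneousComponent l₀ lam ≠ 0)
    (hlam : ∀ l < l₀, homogeneousComponent l lam = 0) (hl : l₀ ≤ N) :
    Module.finrank K ((restrictTotalDegree σ K N).map
      (truncTotalDegree σ K N ∘ₗ LinearMap.mulLeft K lam)) =
      Module.finrank K (restrictTotalDegree σ K (N - l₀)) := by
  rw [map_truncTotalDegree_mul_restrictTotalDegree hlam hl, ← LinearMap.range_domRestrict]
  refine LinearMap.finrank_range_of_inj ((injective_iff_map_eq_zero _).mpr fun p hp => ?_)
  exact Subtype.ext (eq_zero_of_truncTotalDegree_mul_eq_zero hlam₀ hlam hl p.2 hp)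

section PartialDerivatives

variable {n : ℕ}

theorem pderiv_pow_monomial (j : Fin n) (k : ℕ) (β : Fin n →₀ ℕ) (d : ℂ) :
    ((pderiv j).toLinearMap ^ k : Module.End ℂ (MvPolynomial (Fin n) ℂ)) (monomial β d) =
      monomial (β - Finsupp.single j k) (d * (β j).descFactorial k) := by
  induction k with
  | zero => simp
  | succ k ih =>
    rw [pow_succ', Module.End.mul_apply, ih, Derivation.coeFn_coe, pderiv_monomial, tsub_tsub,
      ← Finsupp.single_add, Finsupp.tsub_apply, Finsupp.single_eq_same, Nat.descFactorial_succ]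
    push_cast
    ring_nf

theorem pderivPow_monomial (α β : Fin n →₀ ℕ) (d : ℂ) :
    pderivPow α (monomial β d) = monomial (β - α) (d * ∏ j, (β j).descFactorial (α j)) := by
  suffices ∀ L : List (Fin n), L.Nodup →
      (L.map fun j => ((pderiv j).toLinearMap : Module.End ℂ (MvPolynomial (Fin n) ℂ)) ^ α j).prod
        (monomial β d) =
      monomial (β - ∑ j ∈ L.toFinset, Finsupp.single j (α j))
        (d * ∏ j ∈ L.toFinset, (β j).descFactorial (α j)) by
    rw [pderivPow, this _ (List.nodup_finRange n), List.toFinset_finRange, Finsupp.univ_sum_single]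
  intro L hL
  induction L with
  | nil => simp
  | cons j L ih =>
    obtain ⟨hj, hL⟩ := List.nodup_cons.mp hL
    have hjL : j ∉ L.toFinset := by simpa using hj
    have hβj : (β - ∑ i ∈ L.toFinset, Finsupp.single i (α i)) j = β j := by
      rw [Finsupp.tsub_apply, Finsupp.finsetSum_apply,
        Finset.sum_eq_zero fun i hi => Finsupp.single_eq_of_ne (by rintro rfl; exact hjL hi),
        Nat.sub_zero]
    rw [List.map_cons, List.prod_cons, Module.End.mul_apply, ih hL, pderiv_pow_monomial, hβj,
      List.toFinset_cons, Finset.sum_insert hjL, Finset.prod_insert hjL, tsub_tsub, add_comm]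
    push_cast
    congr 1
    ring

theorem pderivPow_monomial_of_not_le {α β : Fin n →₀ ℕ} (h : ¬α ≤ β) (d : ℂ) :
    pderivPow α (monomial β d) = 0 := by
  obtain ⟨j, hj⟩ : ∃ j, β j < α j := by simpa [Finsupp.le_def] using h
  rw [pderivPow_monomial, Finset.prod_eq_zero (Finset.mem_univ j)
    (Nat.descFactorial_eq_zero_iff_lt.mpr hj), Nat.cast_zero, mul_zero, monomial_zero]

theorem pderivPow_mem_restrictTotalDegree (α : Fin n →₀ ℕ) {m : ℕ} {p : MvPolynomial (Fin n) ℂ}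
    (hp : p ∈ restrictTotalDegree (Fin n) ℂ m) :
    pderivPow α p ∈ restrictTotalDegree (Fin n) ℂ (m - α.degree) := by
  refine map_restrictTotalDegree_le (pderivPow α) (fun β hβ => ?_) ⟨p, hp, rfl⟩
  by_cases hαβ : α ≤ β
  · have hdeg : (β - α).degree + α.degree = β.degree := by
      rw [← map_add, tsub_add_cancel_of_le hαβ]
    rw [pderivPow_monomial, mem_restrictTotalDegree]
    exact (totalDegree_monomial_le _ _).trans (show (β - α).degree ≤ _ by omega)
  · rw [pderivPow_monomial_of_not_le hαβ]
    exact zero_mem _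

theorem pderivPow_eq_zero_of_lt {α : Fin n →₀ ℕ} {m : ℕ} (hm : m < α.degree)
    {p : MvPolynomial (Fin n) ℂ} (hp : p ∈ restrictTotalDegree (Fin n) ℂ m) :
    pderivPow α p = 0 := by
  refine (Submodule.mem_bot ℂ).mp
    (map_restrictTotalDegree_le (pderivPow α) (fun β hβ => ?_) ⟨p, hp, rfl⟩)
  rw [pderivPow_monomial_of_not_le fun hαβ => (Finsupp.degree_mono hαβ).not_gt (by omega)]
  exact zero_mem _

theorem coeff_zero_pderivPow (α : Fin n →₀ ℕ) (p : MvPolynomial (Fin n) ℂ) :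
    coeff 0 (pderivPow α p) = coeff α p * ∏ j, ((α j).factorial : ℂ) := by
  induction p using induction_on' with
  | add p q hp hq => rw [map_add, coeff_add, hp, hq, coeff_add, add_mul]
  | monomial β b =>
    by_cases hαβ : α ≤ β
    · rw [pderivPow_monomial, coeff_monomial, coeff_monomial]
      by_cases h : β = α
      · subst h
        simp [Nat.descFactorial_self]
      · rw [if_neg (fun h' => h (le_antisymm (tsub_eq_zero_iff_le.mp h') hαβ)), if_neg h, zero_mul]
    · rw [pderivPow_monomial_of_not_le hαβ, coeff_zero, coeff_monomial,
        if_neg (fun h => hαβ h.ge), zero_mul]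

end PartialDerivatives

section Fischer

variable {n : ℕ}

variable (n) in
noncomputable def diffOp :
    MvPolynomial (Fin n) ℂ →ₗ[ℂ] Module.End ℂ (MvPolynomial (Fin n) ℂ) :=
  (basisMonomials (Fin n) ℂ).constr ℂ pderivPow

theorem diffOp_monomial (α : Fin n →₀ ℕ) (c : ℂ) :
    diffOp n (monomial α c) = c • pderivPow α := by
  have hbasis : diffOp n (monomial α 1) = pderivPow α := by
    simpa [diffOp, coe_basisMonomials] using (basisMonomials (Fin n) ℂ).constr_basis ℂ pderivPow α
  rw [← hbasis, ← map_smul, smul_monomial, smul_eq_mul, mul_one]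

theorem diffOp_apply (q : MvPolynomial (Fin n) ℂ) :
    diffOp n q = ∑ α ∈ q.support, q.coeff α • pderivPow α := by
  conv_lhs => rw [q.as_sum]
  simp only [map_sum, diffOp_monomial]

theorem QD_eq_smul_diffOp {q : MvPolynomial (Fin n) ℂ} {l : ℕ} (hq : q.IsHomogeneous l) :
    QD q = (-Complex.I) ^ l • diffOp n q := by
  rw [QD, diffOp_apply, Finset.smul_sum]
  refine Finset.sum_congr rfl fun α hα => ?_
  have hdeg : (α.sum fun _ k => k) = l := (hq.degree_eq_sum_deg_support hα).symm
  rw [smul_smul, mul_comm, hdeg]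

variable (n) in
noncomputable def fischer : MvPolynomial (Fin n) ℂ →ₗ[ℂ] MvPolynomial (Fin n) ℂ →ₗ[ℂ] ℂ :=
  (diffOp n).compr₂ (lcoeff ℂ 0)

theorem fischer_monomial_left (α : Fin n →₀ ℕ) (a : ℂ) (p : MvPolynomial (Fin n) ℂ) :
    fischer n (monomial α a) p = a * coeff α p * ∏ j, ((α j).factorial : ℂ) := by
  rw [fischer, LinearMap.compr₂_apply, diffOp_monomial, LinearMap.smul_apply, lcoeff_apply,
    coeff_smul, coeff_zero_pderivPow, smul_eq_mul, mul_assoc]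

theorem fischer_comm (p r : MvPolynomial (Fin n) ℂ) : fischer n p r = fischer n r p := by
  suffices fischer n = (fischer n).flip from LinearMap.congr_fun₂ this p r
  refine LinearMap.ext_basis (basisMonomials _ _) (basisMonomials _ _) fun α β => ?_
  simp only [coe_basisMonomials, LinearMap.flip_apply, fischer_monomial_left, coeff_monomial]
  split_ifs <;> simp_all

theorem isAdjointPair_fischer_diffOp (q : MvPolynomial (Fin n) ℂ) :
    LinearMap.IsAdjointPair (fischer n) (fischer n) (diffOp n q) (LinearMap.mulLeft ℂ q) := by
  induction q using induction_on' with
  | add q₁ q₂ h₁ h₂ =>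
    intro p w
    simpa only [map_add, LinearMap.add_apply, LinearMap.mulLeft_apply, add_mul]
      using congrArg₂ (· + ·) (h₁ p w) (h₂ p w)
  | monomial α a =>
    rw [LinearMap.isAdjointPair_iff_comp_eq_compl₂]
    refine LinearMap.ext_basis (basisMonomials _ _) (basisMonomials _ _) fun β γ => ?_
    simp only [coe_basisMonomials, LinearMap.comp_apply, LinearMap.compl₂_apply,
      LinearMap.mulLeft_apply, diffOp_monomial, LinearMap.smul_apply, monomial_mul]
    by_cases hαβ : α ≤ β
    · have hiff : γ = β - α ↔ α + γ = β := by
        rw [eq_tsub_iff_add_eq_of_le hαβ, add_comm]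
      have hfac : (∏ j, ((β j).descFactorial (α j) : ℂ)) * ∏ j, (((β - α) j).factorial : ℂ) =
          ∏ j, ((β j).factorial : ℂ) := by
        rw [← Finset.prod_mul_distrib]
        refine Finset.prod_congr rfl fun j _ => ?_
        rw [Finsupp.tsub_apply, mul_comm, ← Nat.cast_mul,
          Nat.factorial_mul_descFactorial (Finsupp.le_def.mp hαβ j)]
      rw [pderivPow_monomial, map_smul, LinearMap.smul_apply, fischer_monomial_left,
        fischer_monomial_left, coeff_monomial, coeff_monomial]
      by_cases h : α + γ = β
      · rw [if_pos (hiff.mpr h), if_pos h, ← hfac]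
        push_cast
        ring
      · rw [if_neg (mt hiff.mp h), if_neg h]
        simp
    · have h : α + γ ≠ β := fun h => hαβ (h ▸ le_self_add)
      rw [pderivPow_monomial_of_not_le hαβ, smul_zero, map_zero, LinearMap.zero_apply,
        fischer_monomial_left, coeff_monomial, if_neg h]
      simp

theorem separatingRight_fischer_domRestrict (m : ℕ) :
    ((fischer n).domRestrict₁₂ (restrictTotalDegree (Fin n) ℂ m)
      (restrictTotalDegree (Fin n) ℂ m)).SeparatingRight := by
  intro p hp
  ext α
  rw [ZeroMemClass.coe_zero, coeff_zero]
  by_contra hα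
  have hα_deg : α.degree ≤ m := (le_totalDegree (mem_support_iff.mpr hα)).trans
    ((mem_restrictTotalDegree _ _ _).mp p.2)
  have hmem : monomial α 1 ∈ restrictTotalDegree (Fin n) ℂ m :=
    (mem_restrictTotalDegree _ _ _).mpr ((totalDegree_monomial_le _ _).trans hα_deg)
  have := hp ⟨_, hmem⟩
  rw [LinearMap.domRestrict₁₂_apply, fischer_monomial_left, one_mul] at this
  exact hα (by simpa [Finset.prod_eq_zero_iff, Nat.factorial_ne_zero] using this)

theorem separatingLeft_fischer_domRestrict (m : ℕ) :
    ((fischer n).domRestrict₁₂ (restrictTotalDegree (Fin n) ℂ m)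
      (restrictTotalDegree (Fin n) ℂ m)).SeparatingLeft := fun p hp =>
  separatingRight_fischer_domRestrict m p fun r => by
    rw [LinearMap.domRestrict₁₂_apply, fischer_comm]
    exact hp r

theorem map_diffOp_restrictTotalDegree_le {q : MvPolynomial (Fin n) ℂ} {l : ℕ}
    (hq : q.IsHomogeneous l) (N : ℕ) :
    (restrictTotalDegree (Fin n) ℂ N).map (diffOp n q) ≤ restrictTotalDegree (Fin n) ℂ (N - l) := by
  rintro - ⟨p, hp, rfl⟩
  rw [diffOp_apply, LinearMap.sum_apply]
  refine Submodule.sum_mem _ fun α hα => Submodule.smul_mem _ _ ?_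
  have hα_deg : α.degree = l := (hq.degree_eq_sum_deg_support hα).symm
  exact hα_deg ▸ pderivPow_mem_restrictTotalDegree α hp

theorem map_diffOp_restrictTotalDegree_eq_bot {q : MvPolynomial (Fin n) ℂ} {l N : ℕ}
    (hq : q.IsHomogeneous l) (hN : N < l) :
    (restrictTotalDegree (Fin n) ℂ N).map (diffOp n q) = ⊥ := by
  refine eq_bot_iff.mpr ?_
  rintro - ⟨p, hp, rfl⟩
  rw [Submodule.mem_bot, diffOp_apply, LinearMap.sum_apply]
  refine Finset.sum_eq_zero fun α hα => ?_
  have hα_deg : α.degree = l := (hq.degree_eq_sum_deg_support hα).symm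
  rw [LinearMap.smul_apply, pderivPow_eq_zero_of_lt (hα_deg ▸ hN) hp, smul_zero]

theorem map_diffOp_restrictTotalDegree {q : MvPolynomial (Fin n) ℂ} {l N : ℕ}
    (hq : q.IsHomogeneous l) (hq₀ : q ≠ 0) (hl : l ≤ N) :
    (restrictTotalDegree (Fin n) ℂ N).map (diffOp n q) = restrictTotalDegree (Fin n) ℂ (N - l) := by
  set V := restrictTotalDegree (Fin n) ℂ N
  set W := restrictTotalDegree (Fin n) ℂ (N - l)
  refine le_antisymm (map_diffOp_restrictTotalDegree_le hq N) fun w hw => ?_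
  have hmul : ∀ r ∈ W, q * r ∈ V := fun r hr => by
    rw [mem_restrictTotalDegree] at hr ⊢
    exact (totalDegree_mul q r).trans (by have := hq.totalDegree_le; omega)
  let T : V →ₗ[ℂ] W :=
    (diffOp n q).restrict fun p hp => map_diffOp_restrictTotalDegree_le hq N ⟨p, hp, rfl⟩
  let S : W →ₗ[ℂ] V := (LinearMap.mulLeft ℂ q).restrict hmul
  have hS : Function.Injective S := fun r s h =>
    Subtype.ext (mul_right_injective₀ hq₀ (congrArg Subtype.val h))
  have hTS : LinearMap.IsAdjointPair
      ((fischer n).domRestrict₁₂ V V) ((fischer n).domRestrict₁₂ W W) T S :=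
    fun v w => isAdjointPair_fischer_diffOp q v w
  obtain ⟨v, hv⟩ := hTS.surjective_of_injective (separatingRight_fischer_domRestrict N)
    (separatingLeft_fischer_domRestrict (N - l)) hS ⟨w, hw⟩
  exact ⟨v, v.2, congrArg Subtype.val hv⟩

end Fischer

end MvPolynomial

theorem codim_range_truncated_multiplication_general {n : ℕ} (N : ℕ)
    (lam : MvPolynomial (Fin n) ℂ) (l₀ : ℕ)
    (hl₀ : homogeneousComponent l₀ lam ≠ 0)
    (hmin : ∀ l < l₀, homogeneousComponent l lam = 0)
    (Λ : MvPolynomial (Fin n) ℂ →ₗ[ℂ] MvPolynomial (Fin n) ℂ)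
    (hΛ : ∀ p : MvPolynomial (Fin n) ℂ,
      Λ p = ∑ l ∈ Finset.range (N + 1), homogeneousComponent l (lam * p)) :
    Module.finrank ℂ
      (↥(restrictTotalDegree (Fin n) ℂ N) ⧸
        (Submodule.map Λ (restrictTotalDegree (Fin n) ℂ N)).comap
          (restrictTotalDegree (Fin n) ℂ N).subtype) =
    Module.finrank ℂ
      ↥(restrictTotalDegree (Fin n) ℂ N ⊓
        LinearMap.ker (QD (homogeneousComponent l₀ lam))) := by
  set V := restrictTotalDegree (Fin n) ℂ N
  set q := homogeneousComponent l₀ lam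
  have hq : q.IsHomogeneous l₀ := homogeneousComponent_isHomogeneous l₀ lam
  have hΛeq : Λ = truncTotalDegree (Fin n) ℂ N ∘ₗ LinearMap.mulLeft ℂ lam :=
    LinearMap.ext fun p => (hΛ p).trans (truncTotalDegree_apply N _).symm
  have hΛV : V.map Λ ≤ V := by
    rintro - ⟨p, -, rfl⟩
    rw [hΛeq]
    exact truncTotalDegree_mem N _
  have hmapQD : V.map (QD q) = V.map (diffOp n q) := by
    rw [QD_eq_smul_diffOp hq,
      Submodule.map_smul _ _ _ (pow_ne_zero _ (neg_ne_zero.mpr Complex.I_ne_zero))]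
  have hrank : Module.finrank ℂ (V.map Λ) = Module.finrank ℂ (V.map (diffOp n q)) := by
    rw [hΛeq]
    rcases le_or_gt l₀ N with hl | hl
    · rw [finrank_map_truncTotalDegree_mul hl₀ hmin hl, map_diffOp_restrictTotalDegree hq hl₀ hl]
    · rw [map_diffOp_restrictTotalDegree_eq_bot hq hl,
        LinearMap.le_ker_iff_map.mp fun p _ =>
          LinearMap.mem_ker.mpr (truncTotalDegree_mul_eq_zero_of_lt hmin hl p)]
  have hcodim := Submodule.finrank_quotient_comap_subtype_add_finrank hΛV
  have hker := Submodule.finrank_inf_ker_add_finrank_map (QD q) V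
  rw [hmapQD] at hker
  omega

/-- Let `λ ≠ 0` be a polynomial in `n ≥ 1` complex variables whose lowest-degree nonzero
homogeneous component is `λ_{l₀}`. Let `Λ_N : 𝒫_N → 𝒫_N` (on the space `𝒫_N` of polynomials
of total degree at most `N`) send `p` to the truncation of `λ * p` to degree at most `N`.
Then the codimension in `𝒫_N` of the range of `Λ_N` equals the dimension of the space of
`λ_{l₀}`-harmonic polynomials of degree at most `N`. -/
theorem codim_range_truncated_multiplication {n : ℕ} (hn : 1 ≤ n) (N : ℕ)
    (lam : MvPolynomial (Fin n) ℂ) (hlam : lam ≠ 0) (l₀ : ℕ)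
    (hl₀ : homogeneousComponent l₀ lam ≠ 0)
    (hmin : ∀ l < l₀, homogeneousComponent l lam = 0)
    (Λ : MvPolynomial (Fin n) ℂ →ₗ[ℂ] MvPolynomial (Fin n) ℂ)
    (hΛ : ∀ p : MvPolynomial (Fin n) ℂ,
      Λ p = ∑ l ∈ Finset.range (N + 1), homogeneousComponent l (lam * p)) :
    Module.finrank ℂ
      (↥(restrictTotalDegree (Fin n) ℂ N) ⧸
        (Submodule.map Λ (restrictTotalDegree (Fin n) ℂ N)).comap
          (restrictTotalDegree (Fin n) ℂ N).subtype) =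
    Module.finrank ℂ
      ↥(restrictTotalDegree (Fin n) ℂ N ⊓
        LinearMap.ker (QD (homogeneousComponent l₀ lam))) :=
  codim_range_truncated_multiplication_general N lam l₀ hl₀ hmin Λ hΛ
end

section
/- Let n ≥ 1, let l₀ ≥ 0, and for each l ≥ l₀ let λ_l be a homogeneous polynomial of degree l in n complex variables with λ_{l₀} ≠ 0. Fix N ≥ l₀ and a linear map R : 𝒫 → 𝒫 preserving homogeneity (mapping homogeneous polynomials of degree l to homogeneous polynomials of degree l + l₀) such that λ_{l₀}(D)(R p) = p for all p ∈ 𝒫. Let S be the space of tuples (p₀,…,p_N), where each p_j is a homogeneous polynomial of degree j (or zero), satisfying the triangular system Σ_{j = i+l₀}^{N} λ_{j−i}(D) p_j = 0 for every i = 0,…,N−l₀. Then the map (p₀,…,p_N) ↦ (φ₀,…,φ_N), where φ_j = p_j + R(Σ_{i > j} λ_{i−j+l₀}(D) p_i), is a linear isomorphism from S onto the space of tuples (φ₀,…,φ_N) in which each φ_j is a λ_{l₀}-harmonic homogeneous polynomial of degree j. In particular, dim S equals the dimension of the space of λ_{l₀}-harmonic polynomials of degree at most N. -/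
open MvPolynomial

/-- The linear map `(p₀,…,p_N) ↦ ∑_{j = i+l₀}^{N} λ_{j-i}(D) p_j` appearing in the
triangular system. -/
noncomputable def triangularMap {n : ℕ} (N l₀ : ℕ) (lam : ℕ → MvPolynomial (Fin n) ℂ)
    (i : ℕ) : (Fin (N + 1) → MvPolynomial (Fin n) ℂ) →ₗ[ℂ] MvPolynomial (Fin n) ℂ :=
  ∑ j ∈ Finset.univ.filter (fun j : Fin (N + 1) => i + l₀ ≤ (j : ℕ)),
    (QD (lam ((j : ℕ) - i))) ∘ₗ LinearMap.proj j

/-- The space `S` of tuples `(p₀,…,p_N)` of homogeneous polynomials (`deg pⱼ = j` or `pⱼ = 0`)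
satisfying the triangular system `∑_{j = i+l₀}^{N} λ_{j-i}(D) p_j = 0` for `i = 0,…,N-l₀`. -/
noncomputable def solSpace {n : ℕ} (N l₀ : ℕ) (lam : ℕ → MvPolynomial (Fin n) ℂ) :
    Submodule ℂ (Fin (N + 1) → MvPolynomial (Fin n) ℂ) :=
  (Submodule.pi Set.univ fun j : Fin (N + 1) => homogeneousSubmodule (Fin n) ℂ (j : ℕ)) ⊓
    ⨅ i ∈ Finset.range (N - l₀ + 1), LinearMap.ker (triangularMap N l₀ lam i)

/-- The space of tuples `(φ₀,…,φ_N)` where each `φⱼ` is a `Q`-harmonic homogeneous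
polynomial of degree `j` (or zero). -/
noncomputable def harmTupleSpace {n : ℕ} (N : ℕ) (Q : MvPolynomial (Fin n) ℂ) :
    Submodule ℂ (Fin (N + 1) → MvPolynomial (Fin n) ℂ) :=
  Submodule.pi Set.univ fun j : Fin (N + 1) =>
    homogeneousSubmodule (Fin n) ℂ (j : ℕ) ⊓ LinearMap.ker (QD Q)

/-! The substitution `φ = (1 + T) p`, where `(T p)_j = R (∑_{i > j} λ_{i-j+l₀}(D) p_i)`, turns the
equation of the triangular system with index `j - l₀` into `λ_{l₀}(D) φ_j = 0`, because
`λ_{l₀}(D) ∘ R = id`. As `T` is strictly upper triangular, `1 + T` is invertible with inverse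
`∑ₖ (-T)^k`, which preserves homogeneity since `λ_l(D)` lowers degrees by `l` and `R` raises them
by `l₀`. For the dimension count, a `λ_{l₀}`-harmonic polynomial of degree `≤ N` splits into
homogeneous components that are again `λ_{l₀}`-harmonic. -/

theorem Module.End.pow_eq_zero_of_strictlyUpperTriangular {R M : Type*} [Semiring R]
    [AddCommMonoid M] [Module R M] {m : ℕ} (T : Module.End R (Fin m → M))
    (hT : ∀ p j, (∀ i, j < i → p i = 0) → T p j = 0) : T ^ m = 0 := by
  have key : ∀ k p (j : Fin m), m ≤ j + k → (T ^ k) p j = 0 := by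
    intro k
    induction k with
    | zero => intro p j hj; omega
    | succ k ih =>
      intro p j hj
      rw [pow_succ', Module.End.mul_apply]
      exact hT _ j fun i hi => ih p i (by rw [Fin.lt_def] at hi; omega)
  exact LinearMap.ext fun p => funext fun j => key m p j (by omega)

theorem Submodule.mem_of_one_add_apply_mem {R M : Type*} [Ring R] [AddCommGroup M] [Module R M]
    {T : Module.End R M} (hT : IsNilpotent T) {H : Submodule R M} (hH : H ≤ H.comap T) {x : M}
    (hx : (1 + T) x ∈ H) : x ∈ H := by
  obtain ⟨k, hk⟩ := hT
  have hinv : (∑ i ∈ Finset.range k, (-T) ^ i) * (1 + T) = 1 := by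
    simpa [neg_pow T, hk] using geom_sum_mul_neg (-T) k
  have hneg : H ≤ H.comap (-T) := fun y hy => H.neg_mem (hH hy)
  have hx' : x = (∑ i ∈ Finset.range k, (-T) ^ i) ((1 + T) x) := by
    rw [← Module.End.mul_apply, hinv, Module.End.one_apply]
  rw [hx', LinearMap.sum_apply]
  exact Submodule.sum_mem _ fun i _ => H.le_comap_pow_of_le_comap hneg i hx

namespace MvPolynomial

variable (σ R : Type*) [CommSemiring R]

/-- The vanishing clause for `m < d` is what makes the truncated subtraction `m - d` harmless. -/
def lowersDegree (d : ℕ) : Submodule R (Module.End R (MvPolynomial σ R)) where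
  carrier := {L | ∀ ⦃m : ℕ⦄ ⦃p : MvPolynomial σ R⦄, p.IsHomogeneous m →
    (L p).IsHomogeneous (m - d) ∧ (m < d → L p = 0)}
  add_mem' {L L'} hL hL' m p hp :=
    ⟨(hL hp).1.add (hL' hp).1, fun hm => by simp [(hL hp).2 hm, (hL' hp).2 hm]⟩
  zero_mem' _ _ _ := ⟨isHomogeneous_zero _ _ _, fun _ => rfl⟩
  smul_mem' c L hL m p hp := by
    refine ⟨?_, fun hm => by simp [(hL hp).2 hm]⟩
    rw [← mem_homogeneousSubmodule] at hp ⊢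
    exact Submodule.smul_mem _ c (hL hp).1

instance : SetLike.GradedMonoid (lowersDegree σ R) where
  one_mem _ _ hp := ⟨hp, fun h => absurd h (Nat.not_lt_zero _)⟩
  mul_mem {i j L L'} hL hL' m p hp := by
    refine ⟨?_, fun hm => ?_⟩
    · rw [add_comm, ← Nat.sub_sub]
      exact (hL (hL' hp).1).1
    · by_cases hmj : m < j
      · simp [(hL' hp).2 hmj]
      · exact (hL (hL' hp).1).2 (by omega)

noncomputable def homogeneousTuples (N : ℕ) : Submodule R (Fin (N + 1) → MvPolynomial σ R) :=
  Submodule.pi Set.univ fun j => homogeneousSubmodule σ R j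

variable {σ R}

theorem mem_homogeneousTuples {N : ℕ} {φ : Fin (N + 1) → MvPolynomial σ R} :
    φ ∈ homogeneousTuples σ R N ↔ ∀ j, (φ j).IsHomogeneous j := by
  simp [homogeneousTuples, Submodule.mem_pi]

theorem pderiv_mem_lowersDegree (i : σ) : (pderiv i).toLinearMap ∈ lowersDegree σ R 1 := by
  intro m p hp
  refine ⟨hp.pderiv, fun hm => ?_⟩
  obtain rfl : m = 0 := by omega
  rw [← totalDegree_zero_iff_isHomogeneous, totalDegree_eq_zero_iff_eq_C] at hp
  rw [hp]
  exact pderiv_C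

theorem homogeneousComponent_apply_of_mem_lowersDegree {L : Module.End R (MvPolynomial σ R)}
    {d : ℕ} (hL : L ∈ lowersDegree σ R d) (m : ℕ) (p : MvPolynomial σ R) :
    homogeneousComponent m (L p) = L (homogeneousComponent (m + d) p) := by
  have hcomp k := hL (homogeneousComponent_isHomogeneous k p)
  conv_lhs => rw [← sum_homogeneousComponent p]
  rw [map_sum, map_sum, Finset.sum_eq_single (m + d)]
  · rw [homogeneousComponent_of_mem (hcomp (m + d)).1, Nat.add_sub_cancel, if_pos rfl]
  · intro k _ hk
    by_cases hkd : k < d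
    · rw [(hcomp k).2 hkd, map_zero]
    · rw [homogeneousComponent_of_mem (hcomp k).1, if_neg (by omega)]
  · intro hmd
    rw [homogeneousComponent_eq_zero (m + d) p (by simpa using hmd), map_zero, map_zero]

theorem apply_homogeneousComponent_eq_zero_of_mem_lowersDegree
    {L : Module.End R (MvPolynomial σ R)} {d : ℕ} (hL : L ∈ lowersDegree σ R d)
    {p : MvPolynomial σ R} (hp : L p = 0) (k : ℕ) : L (homogeneousComponent k p) = 0 := by
  by_cases hkd : k < d
  · exact (hL (homogeneousComponent_isHomogeneous k p)).2 hkd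
  · rw [show k = k - d + d by omega, ← homogeneousComponent_apply_of_mem_lowersDegree hL, hp,
      map_zero]

theorem sum_homogeneousComponent_of_totalDegree_le {p : MvPolynomial σ R} {N : ℕ}
    (hp : p.totalDegree ≤ N) : ∑ i ∈ Finset.range (N + 1), homogeneousComponent i p = p := by
  conv_rhs => rw [← sum_homogeneousComponent p]
  refine (Finset.sum_subset (Finset.range_subset_range.mpr (by omega)) fun i _ hi => ?_).symm
  exact homogeneousComponent_eq_zero i p (by simpa using hi)

theorem mem_pi_homogeneousSubmodule_inf_ker {L : Module.End R (MvPolynomial σ R)} {N : ℕ}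
    {φ : Fin (N + 1) → MvPolynomial σ R} :
    φ ∈ Submodule.pi Set.univ (fun j : Fin (N + 1) =>
        homogeneousSubmodule σ R (j : ℕ) ⊓ LinearMap.ker L) ↔
      ∀ j, (φ j).IsHomogeneous j ∧ L (φ j) = 0 := by
  simp [Submodule.mem_pi]

noncomputable def homogeneousTuplesKerEquiv {L : Module.End R (MvPolynomial σ R)} {d : ℕ}
    (hL : L ∈ lowersDegree σ R d) (N : ℕ) :
    (Submodule.pi Set.univ fun j : Fin (N + 1) =>
        homogeneousSubmodule σ R (j : ℕ) ⊓ LinearMap.ker L) ≃ₗ[R]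
      ↥(restrictTotalDegree σ R N ⊓ LinearMap.ker L) :=
  LinearEquiv.ofLinearMap
    ((∑ j : Fin (N + 1), LinearMap.proj j).restrict fun φ hφ => by
      rw [mem_pi_homogeneousSubmodule_inf_ker] at hφ
      simp only [LinearMap.sum_apply, LinearMap.proj_apply]
      refine ⟨Submodule.sum_mem _ fun j _ => ?_, ?_⟩
      · exact (mem_restrictTotalDegree σ N _).mpr ((hφ j).1.totalDegree_le.trans (by omega))
      · simp [(hφ _).2])
    ((LinearMap.pi fun j : Fin (N + 1) => homogeneousComponent (j : ℕ)).restrict fun p hp => by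
      rw [mem_pi_homogeneousSubmodule_inf_ker]
      exact fun j => ⟨homogeneousComponent_isHomogeneous _ _,
        apply_homogeneousComponent_eq_zero_of_mem_lowersDegree hL hp.2 _⟩)
    (by
      refine LinearMap.ext fun ⟨p, hp⟩ => Subtype.ext ?_
      simpa [LinearMap.sum_apply, Fin.sum_univ_eq_sum_range (homogeneousComponent · p)] using
        sum_homogeneousComponent_of_totalDegree_le ((mem_restrictTotalDegree σ N p).mp hp.1))
    (by
      refine LinearMap.ext fun ⟨φ, hφ⟩ => Subtype.ext ?_
      funext j
      rw [mem_pi_homogeneousSubmodule_inf_ker] at hφ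
      simp only [LinearMap.coe_comp, Function.comp_apply, LinearMap.restrict_apply,
        LinearMap.sum_apply, LinearMap.proj_apply, LinearMap.pi_apply, LinearMap.id_apply]
      rw [map_sum, Finset.sum_eq_single j (fun k _ hk => ?_) (by simp),
        homogeneousComponent_eq_self (hφ j).1]
      rw [homogeneousComponent_of_mem (hφ k).1, if_neg (Fin.val_ne_of_ne hk.symm)])

end MvPolynomial

theorem pderivPow_mem_lowersDegree {n : ℕ} (α : Fin n →₀ ℕ) :
    pderivPow α ∈ lowersDegree (Fin n) ℂ α.degree := by
  have h := SetLike.list_prod_map_mem_graded (A := lowersDegree (Fin n) ℂ) (List.finRange n) α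
    (fun j => ((pderiv j).toLinearMap : Module.End ℂ _) ^ α j)
    fun j _ => by simpa using SetLike.pow_mem_graded (α j) (pderiv_mem_lowersDegree (R := ℂ) j)
  rwa [← Fin.sum_univ_def, ← Finsupp.degree_eq_sum] at h

theorem QD_mem_lowersDegree {n d : ℕ} {Q : MvPolynomial (Fin n) ℂ} (hQ : Q.IsHomogeneous d) :
    QD Q ∈ lowersDegree (Fin n) ℂ d :=
  Submodule.sum_mem _ fun α hα => Submodule.smul_mem _ _ <| by
    rw [hQ.degree_eq_sum_deg_support hα]
    exact pderivPow_mem_lowersDegree α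

section TriangularSystem

variable {n : ℕ} (N l₀ : ℕ) (lam : ℕ → MvPolynomial (Fin n) ℂ)

noncomputable def tailSum (j : Fin (N + 1)) :
    (Fin (N + 1) → MvPolynomial (Fin n) ℂ) →ₗ[ℂ] MvPolynomial (Fin n) ℂ :=
  ∑ i ∈ Finset.univ.filter (fun i : Fin (N + 1) => (j : ℕ) < i),
    QD (lam ((i : ℕ) - j + l₀)) ∘ₗ LinearMap.proj i

/-- `1 + correction N l₀ lam R` is the map `p ↦ φ` of the theorem. -/
noncomputable def correction (R : Module.End ℂ (MvPolynomial (Fin n) ℂ)) :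
    Module.End ℂ (Fin (N + 1) → MvPolynomial (Fin n) ℂ) :=
  LinearMap.pi fun j => R ∘ₗ tailSum N l₀ lam j

theorem tailSum_apply (j : Fin (N + 1)) (p : Fin (N + 1) → MvPolynomial (Fin n) ℂ) :
    tailSum N l₀ lam j p = ∑ i ∈ Finset.univ.filter (fun i : Fin (N + 1) => (j : ℕ) < i),
      QD (lam ((i : ℕ) - j + l₀)) (p i) := by
  simp [tailSum, LinearMap.sum_apply]

theorem correction_apply (R : Module.End ℂ (MvPolynomial (Fin n) ℂ))
    (p : Fin (N + 1) → MvPolynomial (Fin n) ℂ) (j : Fin (N + 1)) :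
    correction N l₀ lam R p j = R (tailSum N l₀ lam j p) :=
  rfl

theorem correction_pow_eq_zero (R : Module.End ℂ (MvPolynomial (Fin n) ℂ)) :
    correction N l₀ lam R ^ (N + 1) = 0 :=
  Module.End.pow_eq_zero_of_strictlyUpperTriangular _ fun p j hp => by
    rw [correction_apply, tailSum_apply, Finset.sum_eq_zero fun i hi => ?_, map_zero]
    rw [hp i (Fin.lt_def.mpr (by simpa using hi)), map_zero]

theorem triangularMap_sub_eq {j : Fin (N + 1)} (hj : l₀ ≤ j)
    (p : Fin (N + 1) → MvPolynomial (Fin n) ℂ) :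
    triangularMap N l₀ lam (j - l₀) p = QD (lam l₀) (p j) + tailSum N l₀ lam j p := by
  have hset : Finset.univ.filter (fun i : Fin (N + 1) => (j : ℕ) - l₀ + l₀ ≤ i) =
      insert j (Finset.univ.filter fun i : Fin (N + 1) => (j : ℕ) < i) := by
    ext i
    simp only [Finset.mem_filter, Finset.mem_univ, true_and, Finset.mem_insert, Fin.ext_iff]
    omega
  rw [triangularMap, LinearMap.sum_apply, hset, Finset.sum_insert (by simp), tailSum_apply,
    Nat.sub_sub_self hj]
  refine congrArg _ (Finset.sum_congr rfl fun i hi => ?_)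
  have hji : (j : ℕ) < i := by simpa using hi
  simp only [LinearMap.comp_apply, LinearMap.proj_apply]
  rw [show (i : ℕ) - (j - l₀) = i - j + l₀ by omega]

theorem triangularMap_eq_zero_of_lt {i : ℕ} (hi : N < i + l₀) : triangularMap N l₀ lam i = 0 :=
  Finset.sum_eq_zero fun j hj => by
    have := j.isLt
    simp only [Finset.mem_filter, Finset.mem_univ, true_and] at hj
    omega

theorem mem_solSpace_iff {p : Fin (N + 1) → MvPolynomial (Fin n) ℂ} :
    p ∈ solSpace N l₀ lam ↔ p ∈ homogeneousTuples (Fin n) ℂ N ∧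
      ∀ i < N - l₀ + 1, triangularMap N l₀ lam i p = 0 := by
  simp [solSpace, homogeneousTuples]

theorem mem_harmTupleSpace_iff {Q : MvPolynomial (Fin n) ℂ}
    {φ : Fin (N + 1) → MvPolynomial (Fin n) ℂ} :
    φ ∈ harmTupleSpace N Q ↔ φ ∈ homogeneousTuples (Fin n) ℂ N ∧ ∀ j, QD Q (φ j) = 0 := by
  rw [harmTupleSpace, mem_pi_homogeneousSubmodule_inf_ker, mem_homogeneousTuples, forall_and]

variable {N l₀ lam} (hhom : ∀ l, l₀ ≤ l → (lam l).IsHomogeneous l)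
include hhom

theorem tailSum_isHomogeneous {p : Fin (N + 1) → MvPolynomial (Fin n) ℂ}
    (hp : ∀ i, (p i).IsHomogeneous i) (j : Fin (N + 1)) :
    (tailSum N l₀ lam j p).IsHomogeneous (j - l₀) := by
  rw [tailSum_apply, ← mem_homogeneousSubmodule]
  refine Submodule.sum_mem _ fun i hi => ?_
  have hji : (j : ℕ) < i := by simpa using hi
  have := (QD_mem_lowersDegree (hhom (i - j + l₀) (by omega)) (hp i)).1
  rwa [show (i : ℕ) - (i - j + l₀) = j - l₀ by omega] at this

theorem tailSum_eq_zero_of_lt {p : Fin (N + 1) → MvPolynomial (Fin n) ℂ}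
    (hp : ∀ i, (p i).IsHomogeneous i) {j : Fin (N + 1)} (hj : (j : ℕ) < l₀) :
    tailSum N l₀ lam j p = 0 := by
  rw [tailSum_apply]
  refine Finset.sum_eq_zero fun i hi => ?_
  have hji : (j : ℕ) < i := by simpa using hi
  exact (QD_mem_lowersDegree (hhom _ (by omega)) (hp i)).2 (by omega)

theorem homogeneousTuples_le_comap_correction {R : Module.End ℂ (MvPolynomial (Fin n) ℂ)}
    (hR : ∀ l p, p.IsHomogeneous l → (R p).IsHomogeneous (l + l₀)) :
    homogeneousTuples (Fin n) ℂ N ≤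
      (homogeneousTuples (Fin n) ℂ N).comap (correction N l₀ lam R) := by
  intro p hp
  rw [Submodule.mem_comap, mem_homogeneousTuples] at *
  intro j
  rw [correction_apply]
  by_cases hj : l₀ ≤ j
  · simpa [Nat.sub_add_cancel hj] using hR _ _ (tailSum_isHomogeneous hhom hp j)
  · rw [tailSum_eq_zero_of_lt hhom hp (by omega), map_zero]
    exact isHomogeneous_zero _ _ _

theorem mem_solSpace_iff_one_add_correction_apply_mem
    {R : Module.End ℂ (MvPolynomial (Fin n) ℂ)}
    (hR1 : ∀ l p, p.IsHomogeneous l → (R p).IsHomogeneous (l + l₀))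
    (hR2 : ∀ p, QD (lam l₀) (R p) = p) {p : Fin (N + 1) → MvPolynomial (Fin n) ℂ} :
    p ∈ solSpace N l₀ lam ↔ (1 + correction N l₀ lam R) p ∈ harmTupleSpace N (lam l₀) := by
  have hinvariant := homogeneousTuples_le_comap_correction (N := N) hhom hR1
  have hQD j : QD (lam l₀) ((1 + correction N l₀ lam R) p j) =
      QD (lam l₀) (p j) + tailSum N l₀ lam j p := by
    rw [LinearMap.add_apply, Module.End.one_apply, Pi.add_apply, correction_apply, map_add, hR2]
  rw [mem_solSpace_iff, mem_harmTupleSpace_iff]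
  simp only [hQD]
  constructor
  · rintro ⟨hp, hsys⟩
    refine ⟨add_mem hp (hinvariant hp), fun j => ?_⟩
    rw [mem_homogeneousTuples] at hp
    by_cases hj : l₀ ≤ j
    · rw [← triangularMap_sub_eq N l₀ lam hj]
      exact hsys _ (by omega)
    · rw [(QD_mem_lowersDegree (hhom l₀ le_rfl) (hp j)).2 (by omega),
        tailSum_eq_zero_of_lt hhom hp (by omega), add_zero]
  · rintro ⟨hφ, hharm⟩
    refine ⟨Submodule.mem_of_one_add_apply_mem ⟨N + 1, correction_pow_eq_zero N l₀ lam R⟩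
      hinvariant hφ, fun i _ => ?_⟩
    by_cases hiN : N < i + l₀
    · rw [triangularMap_eq_zero_of_lt N l₀ lam hiN, LinearMap.zero_apply]
    · have := triangularMap_sub_eq N l₀ lam (j := ⟨i + l₀, by omega⟩) (by simp) p
      rwa [hharm, Nat.add_sub_cancel] at this

end TriangularSystem

theorem triangular_system_iso_harmonic_tuples_general {n : ℕ} (l₀ : ℕ)
    (lam : ℕ → MvPolynomial (Fin n) ℂ)
    (hhom : ∀ l : ℕ, l₀ ≤ l → (lam l).IsHomogeneous l)
    (N : ℕ)
    (R : MvPolynomial (Fin n) ℂ →ₗ[ℂ] MvPolynomial (Fin n) ℂ)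
    (hR1 : ∀ (l : ℕ) (p : MvPolynomial (Fin n) ℂ), p.IsHomogeneous l →
      (R p).IsHomogeneous (l + l₀))
    (hR2 : ∀ p : MvPolynomial (Fin n) ℂ, QD (lam l₀) (R p) = p) :
    (∃ e : solSpace N l₀ lam ≃ₗ[ℂ] harmTupleSpace N (lam l₀),
      ∀ p : solSpace N l₀ lam,
        (e p : Fin (N + 1) → MvPolynomial (Fin n) ℂ) = fun j =>
          (p : Fin (N + 1) → MvPolynomial (Fin n) ℂ) j +
            R (∑ i ∈ Finset.univ.filter (fun i : Fin (N + 1) => (j : ℕ) < (i : ℕ)),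
              QD (lam ((i : ℕ) - (j : ℕ) + l₀))
                ((p : Fin (N + 1) → MvPolynomial (Fin n) ℂ) i))) ∧
    Module.finrank ℂ (solSpace N l₀ lam) =
      Module.finrank ℂ
        ↥(restrictTotalDegree (Fin n) ℂ N ⊓ LinearMap.ker (QD (lam l₀))) := by
  set T := correction N l₀ lam R
  have hunit : IsUnit (1 + T) :=
    IsNilpotent.isUnit_one_add ⟨N + 1, correction_pow_eq_zero N l₀ lam R⟩
  let e₀ := LinearEquiv.ofBijective (1 + T) ((Module.End.isUnit_iff _).mp hunit)
  have hsol : solSpace N l₀ lam = (harmTupleSpace N (lam l₀)).comap (1 + T) :=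
    Submodule.ext fun _ => mem_solSpace_iff_one_add_correction_apply_mem hhom hR1 hR2
  have hmap : (solSpace N l₀ lam).map (e₀ : _ →ₗ[ℂ] _) = harmTupleSpace N (lam l₀) := by
    rw [hsol]
    exact Submodule.map_comap_eq_of_surjective e₀.surjective _
  let e := e₀.ofSubmodules _ _ hmap
  refine ⟨⟨e, fun p => funext fun j => ?_⟩, ?_⟩
  · simp [e, e₀, T, correction_apply, tailSum_apply]
  · exact e.finrank_eq.trans
      (homogeneousTuplesKerEquiv (QD_mem_lowersDegree (hhom l₀ le_rfl)) N).finrank_eq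

/-- The map `(p₀,…,p_N) ↦ (φ₀,…,φ_N)`, `φⱼ = pⱼ + R(∑_{i>j} λ_{i-j+l₀}(D) pᵢ)`, is a linear
isomorphism from the solution space `S` of the triangular system onto the space of tuples of
`λ_{l₀}`-harmonic homogeneous polynomials; in particular `dim S` equals the dimension of the
space of `λ_{l₀}`-harmonic polynomials of degree at most `N`. -/
theorem triangular_system_iso_harmonic_tuples {n : ℕ} (hn : 1 ≤ n) (l₀ : ℕ)
    (lam : ℕ → MvPolynomial (Fin n) ℂ)
    (hhom : ∀ l : ℕ, l₀ ≤ l → (lam l).IsHomogeneous l) (hne : lam l₀ ≠ 0)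
    (N : ℕ) (hN : l₀ ≤ N)
    (R : MvPolynomial (Fin n) ℂ →ₗ[ℂ] MvPolynomial (Fin n) ℂ)
    (hR1 : ∀ (l : ℕ) (p : MvPolynomial (Fin n) ℂ), p.IsHomogeneous l →
      (R p).IsHomogeneous (l + l₀))
    (hR2 : ∀ p : MvPolynomial (Fin n) ℂ, QD (lam l₀) (R p) = p) :
    (∃ e : solSpace N l₀ lam ≃ₗ[ℂ] harmTupleSpace N (lam l₀),
      ∀ p : solSpace N l₀ lam,
        (e p : Fin (N + 1) → MvPolynomial (Fin n) ℂ) = fun j =>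
          (p : Fin (N + 1) → MvPolynomial (Fin n) ℂ) j +
            R (∑ i ∈ Finset.univ.filter (fun i : Fin (N + 1) => (j : ℕ) < (i : ℕ)),
              QD (lam ((i : ℕ) - (j : ℕ) + l₀))
                ((p : Fin (N + 1) → MvPolynomial (Fin n) ℂ) i))) ∧
    Module.finrank ℂ (solSpace N l₀ lam) =
      Module.finrank ℂ
        ↥(restrictTotalDegree (Fin n) ℂ N ⊓ LinearMap.ker (QD (lam l₀))) :=
  triangular_system_iso_harmonic_tuples_general l₀ lam hhom N R hR1 hR2
end

section
/- Let T be a finite-dimensional, Hausdorff, σ-compact smooth manifold without boundary, let B₁ and B₂ be complex Banach spaces, and let P : T → L(B₁, B₂) be a C^∞ map into the space of bounded linear operators from B₁ to B₂ such that for every z ∈ T the operator P(z) is surjective and has finite-dimensional kernel (i.e., P(z) is a surjective Fredholm operator). Then the multiplication operator on smooth vector-valued functions is surjective: for every C^∞ function g : T → B₂ there exists a C^∞ function f : T → B₁ such that P(z) f(z) = g(z) for all z ∈ T. -/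
/-!
A surjective bounded operator whose kernel has a closed complement, in particular a surjective
Fredholm operator, has a bounded right inverse `Q`. Near `z₀` the operator `P z ∘ Q` is close to
`1`, hence invertible, and `z ↦ Q ∘ (P z ∘ Q)⁻¹` is a smooth local right inverse of `P`; applied
to `g` it gives a local smooth solution. The solution sets `{v | P z v = g z}` are affine, so a
smooth partition of unity glues the local solutions into a global one.
-/

open scoped Manifold ContDiff
open Function Topology

namespace ContinuousLinearMap.HasRightInverse

variable {𝕜 E F : Type*} [NontriviallyNormedField 𝕜] [NormedAddCommGroup E] [NormedSpace 𝕜 E]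
  [CompleteSpace E] [NormedAddCommGroup F] [NormedSpace 𝕜 F] [CompleteSpace F] {f : E →L[𝕜] F}

theorem of_surjective_of_closedComplemented_ker (hsurj : Surjective f)
    (hker : (LinearMap.ker (f : E →ₗ[𝕜] F)).ClosedComplemented) : f.HasRightInverse := by
  obtain ⟨π, hπ⟩ := hker
  have : CompleteSpace (LinearMap.ker (f : E →ₗ[𝕜] F)) := f.isClosed_ker.completeSpace_coe
  -- `x ↦ (f x, π x)` identifies `E` with `F × ker f`; invert it on `F × {0}`.
  let e := equivProdOfSurjectiveOfIsCompl f π (LinearMap.range_eq_top.2 hsurj)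
    (LinearMap.range_eq_top.2 fun y ↦ ⟨y, hπ y⟩) (LinearMap.isCompl_of_proj hπ)
  exact ⟨(e.symm : F × LinearMap.ker (f : E →ₗ[𝕜] F) →L[𝕜] E).comp (inl 𝕜 F _),
    fun y ↦ congrArg Prod.fst (e.apply_symm_apply (y, 0))⟩

theorem of_surjective_of_finiteDimensional_ker [IsRCLikeNormedField 𝕜] (hsurj : Surjective f)
    [FiniteDimensional 𝕜 (LinearMap.ker (f : E →ₗ[𝕜] F))] : f.HasRightInverse :=
  of_surjective_of_closedComplemented_ker hsurj (.of_finiteDimensional _)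

end ContinuousLinearMap.HasRightInverse

section SmoothFamily

variable {𝕜 E H M F G : Type*} [NontriviallyNormedField 𝕜] [NormedAddCommGroup E]
  [NormedSpace 𝕜 E] [TopologicalSpace H] {I : ModelWithCorners 𝕜 E H} [TopologicalSpace M]
  [ChartedSpace H M] [NormedAddCommGroup F] [NormedSpace 𝕜 F] [NormedAddCommGroup G]
  [NormedSpace 𝕜 G] [CompleteSpace G] {n : WithTop ℕ∞} {P : M → F →L[𝕜] G}

theorem ContMDiff.exists_contMDiffOn_rightInverse (hP : CMDiff n P) {z₀ : M}
    (h : (P z₀).HasRightInverse) :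
    ∃ U ∈ 𝓝 z₀, ∃ R : M → G →L[𝕜] F, CMDiff[U] n R ∧ ∀ z ∈ U, RightInverse (R z) (P z) := by
  obtain ⟨Q, hQ⟩ := h
  let A : M → G →L[𝕜] G := fun z ↦ (P z).comp Q
  have hA : CMDiff n A := ((ContinuousLinearMap.compL 𝕜 G F G).flip Q).contDiff.comp_contMDiff hP
  have hA₀ : IsUnit (A z₀) := by
    convert isUnit_one
    ext y
    exact hQ y
  refine ⟨A ⁻¹' {a | IsUnit a}, (Units.isOpen.preimage hA.continuous).mem_nhds hA₀,
    fun z ↦ Q.comp (Ring.inverse (A z)), fun z hz ↦ ?_,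
    fun z hz ↦ DFunLike.congr_fun (Ring.mul_inverse_cancel _ hz)⟩
  have hinv : ContDiffAt 𝕜 n Ring.inverse (A z) :=
    hz.unit_spec ▸ contDiffAt_ringInverse 𝕜 hz.unit
  exact ((ContinuousLinearMap.compL 𝕜 G G F Q).contDiff.contDiffAt.comp _ hinv)
    |>.comp_contMDiffAt (hA z) |>.contMDiffWithinAt

end SmoothFamily

section PartitionOfUnity

variable {E H M F G : Type*} [NormedAddCommGroup E] [NormedSpace ℝ E] [FiniteDimensional ℝ E]
  [TopologicalSpace H] {I : ModelWithCorners ℝ E H} [TopologicalSpace M] [ChartedSpace H M]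
  [IsManifold I ∞ M] [T2Space M] [SigmaCompactSpace M]
  [NormedAddCommGroup F] [NormedSpace ℝ F] [NormedAddCommGroup G] [NormedSpace ℝ G]
  [CompleteSpace G] {n : ℕ∞} {P : M → F →L[ℝ] G}

theorem ContMDiff.exists_contMDiff_forall_apply_eq (hP : CMDiff n P)
    (hR : ∀ z, (P z).HasRightInverse) {g : M → G} (hg : CMDiff n g) :
    ∃ f : M → F, CMDiff n f ∧ ∀ z, P z (f z) = g z := by
  have hconvex : ∀ z, Convex ℝ {v | P z v = g z} := fun z ↦
    (convex_singleton (g z)).linear_preimage (P z : F →ₗ[ℝ] G)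
  have hloc : ∀ z₀, ∃ U ∈ 𝓝 z₀, ∃ f : M → F, CMDiff[U] n f ∧ ∀ z ∈ U, P z (f z) = g z := by
    intro z₀
    obtain ⟨U, hU, R, hRU, hRP⟩ := hP.exists_contMDiffOn_rightInverse (hR z₀)
    exact ⟨U, hU, fun z ↦ R z (g z), hRU.clm_apply hg.contMDiffOn, fun z hz ↦ hRP z hz (g z)⟩
  obtain ⟨f, hf⟩ := exists_contMDiffMap_forall_mem_convex_of_local I hconvex hloc
  exact ⟨f, f.contMDiff, hf⟩

end PartitionOfUnity

/-- Let `T` be a finite-dimensional, Hausdorff, σ-compact smooth manifold without boundary,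
`B₁`, `B₂` complex Banach spaces, and `P : T → L(B₁, B₂)` a `C^∞` family of bounded operators
such that every `P z` is a surjective Fredholm operator (surjective with finite-dimensional
kernel). Then for every smooth `g : T → B₂` there is a smooth `f : T → B₁` with
`P z (f z) = g z` for all `z`. -/
theorem smooth_surjective_fredholm_family_solvable
    {E : Type*} [NormedAddCommGroup E] [NormedSpace ℝ E] [FiniteDimensional ℝ E]
    {T : Type*} [TopologicalSpace T] [ChartedSpace E T]
    [IsManifold (modelWithCornersSelf ℝ E) (⊤ : ℕ∞) T]
    [T2Space T] [SigmaCompactSpace T]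
    {B₁ B₂ : Type*} [NormedAddCommGroup B₁] [NormedSpace ℂ B₁] [CompleteSpace B₁]
    [NormedAddCommGroup B₂] [NormedSpace ℂ B₂] [CompleteSpace B₂]
    (P : T → (B₁ →L[ℂ] B₂))
    (hP : ContMDiff (modelWithCornersSelf ℝ E)
      (modelWithCornersSelf ℝ (B₁ →L[ℂ] B₂)) (⊤ : ℕ∞) P)
    (hsurj : ∀ z : T, Function.Surjective (P z))
    (hker : ∀ z : T, FiniteDimensional ℂ (LinearMap.ker (P z : B₁ →ₗ[ℂ] B₂)))
    (g : T → B₂)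
    (hg : ContMDiff (modelWithCornersSelf ℝ E) (modelWithCornersSelf ℝ B₂) (⊤ : ℕ∞) g) :
    ∃ f : T → B₁,
      ContMDiff (modelWithCornersSelf ℝ E) (modelWithCornersSelf ℝ B₁) (⊤ : ℕ∞) f ∧
      ∀ z : T, P z (f z) = g z := by
  have hR : ∀ z, ((P z).restrictScalars ℝ).HasRightInverse := fun z ↦
    have := hker z
    let ⟨Q, hQ⟩ :=
      ContinuousLinearMap.HasRightInverse.of_surjective_of_finiteDimensional_ker (hsurj z)
    ⟨Q.restrictScalars ℝ, hQ⟩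
  have hPℝ : CMDiff (⊤ : ℕ∞) fun z ↦ (P z).restrictScalars ℝ :=
    (ContinuousLinearMap.restrictScalarsL ℂ B₁ B₂ ℝ ℝ).contDiff.comp_contMDiff hP
  exact hPℝ.exists_contMDiff_forall_apply_eq hR hg
end
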